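/- arXiv:2507.16581 — 4 statements merged into one kernel-verified Lean document; each statement's English description precedes it below -/
import Mathlib

section
/- Let u be a non-degenerate, simple integer linear recurrence sequence with exactly two dominant characteristic roots λ₁ and λ₂. Then λ₂ is the complex conjugate of λ₁, the argument of λ₁ is not a rational multiple of π, and |λ₁| > 1. -/
/-- `u` satisfies the linear recurrence of order `d` with coefficients `c 1, …, c d`:
`u (n + d) = c 1 * u (n + d - 1) + ⋯ + c d * u n`. -/
def SatisfiesRec (u : ℕ → ℤ) (c : ℕ → ℤ) (d : ℕ) : Prop :=
  ∀ n : ℕ, u (n + d) = ∑ j ∈ Finset.Icc 1 d, c j * u (n + d - j)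

/-- An integer linear recurrence sequence, given by its (minimal-order) recurrence. -/
structure IntLRS where
  u : ℕ → ℤ
  d : ℕ
  c : ℕ → ℤ
  d_pos : 0 < d
  hrec : SatisfiesRec u c d
  last_ne : c d ≠ 0
  minimal : ∀ d' : ℕ, 0 < d' → d' < d → ∀ c' : ℕ → ℤ, ¬ SatisfiesRec u c' d'

/-- The characteristic polynomial `X^d - c₁ X^{d-1} - ⋯ - c_d`, over `ℂ`. -/
noncomputable def IntLRS.charPoly (L : IntLRS) : Polynomial ℂ :=
  Polynomial.X ^ L.d -
    ∑ j ∈ Finset.Icc 1 L.d, Polynomial.C ((L.c j : ℂ)) * Polynomial.X ^ (L.d - j)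

def IntLRS.IsCharRoot (L : IntLRS) (z : ℂ) : Prop := L.charPoly.IsRoot z

/-- A characteristic root of maximal modulus. -/
def IntLRS.IsDominantRoot (L : IntLRS) (z : ℂ) : Prop :=
  L.IsCharRoot z ∧ ∀ w : ℂ, L.IsCharRoot w → ‖w‖ ≤ ‖z‖

/-- Every characteristic root has multiplicity one. -/
def IntLRS.Simple (L : IntLRS) : Prop :=
  ∀ z : ℂ, L.charPoly.rootMultiplicity z ≤ 1

/-- No quotient of two distinct characteristic roots is a root of unity. -/
def IntLRS.NonDegenerate (L : IntLRS) : Prop :=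
  ∀ z w : ℂ, L.IsCharRoot z → L.IsCharRoot w → z ≠ w →
    ∀ k : ℕ, 0 < k → (z / w) ^ k ≠ 1

/-- The LRS has exactly two dominant characteristic roots. -/
def IntLRS.TwoDominantRoots (L : IntLRS) : Prop :=
  ∃ z w : ℂ, z ≠ w ∧ ∀ x : ℂ, L.IsDominantRoot x ↔ (x = z ∨ x = w)

/-!
The conjugate of a dominant root is again dominant, so `{λ₁, λ₂}` is closed under conjugation;
were both roots real, equality of moduli would force `λ₂ = -λ₁`, and `λ₁ / λ₂ = -1` would be a
root of unity. Hence `λ₂ = conj λ₁` and `λ₁ / λ₂ = exp (2 i arg λ₁)`, which is a root of unity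
when `arg λ₁ ∈ ℚ π`. Finally, if `|λ₁| ≤ 1`, then `λ₁` and `λ₂` are algebraic integers all of
whose conjugates, being characteristic roots, lie in the closed unit disc; by Kronecker's
theorem both are roots of unity, and so is their quotient.
-/

open Polynomial ComplexConjugate

namespace Complex

theorem div_sq_eq_one_of_conj_eq_self {z w : ℂ} (hz : conj z = z) (hw : conj w = w)
    (hw₀ : w ≠ 0) (hzw : ‖z‖ = ‖w‖) : (z / w) ^ 2 = 1 := by
  obtain ⟨a, rfl⟩ := RCLike.conj_eq_iff_real.1 hz
  obtain ⟨b, rfl⟩ := RCLike.conj_eq_iff_real.1 hw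
  have hab : a ^ 2 = b ^ 2 := by simpa [sq_eq_sq_iff_abs_eq_abs] using hzw
  rw [div_pow, div_eq_one_iff_eq (pow_ne_zero 2 hw₀)]
  exact_mod_cast hab

theorem div_conj_eq_exp {z : ℂ} (hz : z ≠ 0) : z / conj z = exp (2 * arg z * I) := by
  have hr : (‖z‖ : ℂ) ≠ 0 := by simpa using hz
  have hconj : conj z = ‖z‖ * exp (-(arg z * I)) := by
    conv_lhs => rw [← norm_mul_exp_arg_mul_I z]
    rw [map_mul, conj_ofReal, ← exp_conj, map_mul, conj_ofReal, conj_I, mul_neg]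
  rw [hconj, div_eq_iff (mul_ne_zero hr (exp_ne_zero _)), mul_left_comm, ← exp_add]
  conv_lhs => rw [← norm_mul_exp_arg_mul_I z]
  ring_nf

theorem div_conj_pow_den_eq_one {z : ℂ} (hz : z ≠ 0) {q : ℚ} (hq : arg z = q * Real.pi) :
    (z / conj z) ^ q.den = 1 := by
  rw [div_conj_eq_exp hz, ← exp_nat_mul, exp_eq_one_iff, hq]
  refine ⟨q.num, ?_⟩
  have hden : (q.den : ℂ) * (q : ℂ) = q.num := by exact_mod_cast q.den_mul_eq_num
  push_cast
  linear_combination (2 * (Real.pi : ℂ) * I) * hden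

theorem exists_pow_eq_one_of_roots_norm_le_one {p : ℤ[X]} (hp : p.Monic) {z : ℂ}
    (hz₀ : z ≠ 0) (hz : aeval z p = 0) (hroots : ∀ w : ℂ, aeval w p = 0 → ‖w‖ ≤ 1) :
    ∃ n, 0 < n ∧ z ^ n = 1 := by
  have hzℤ : IsIntegral ℤ z := ⟨p, hp, by rwa [← aeval_def]⟩
  let K := IntermediateField.adjoin ℚ {z}
  have : FiniteDimensional ℚ K := IntermediateField.adjoin.finiteDimensional hzℤ.tower_top
  have : NumberField K := { }
  let x : K := IntermediateField.AdjoinSimple.gen ℚ z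
  have hx : algebraMap K ℂ x = z := rfl
  have hxℤ : IsIntegral ℤ x := by
    rwa [← isIntegral_algebraMap_iff (FaithfulSMul.algebraMap_injective K ℂ), hx]
  have hpx : aeval x p = 0 := by
    apply FaithfulSMul.algebraMap_injective K ℂ
    rw [← aeval_algebraMap_apply, hx, hz, map_zero]
  obtain ⟨n, hn, hxn⟩ := NumberField.Embeddings.pow_eq_one_of_norm_le_one K ℂ
    (by simpa [← hx] using hz₀) hxℤ fun φ ↦ hroots _ <| by
      simpa [hpx] using aeval_algHom_apply φ.toIntAlgHom x p
  exact ⟨n, hn, by rw [← hx, ← map_pow, hxn, map_one]⟩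

end Complex

namespace IntLRS

variable (L : IntLRS)

noncomputable def intCharPoly : ℤ[X] :=
  X ^ L.d - ∑ j ∈ Finset.Icc 1 L.d, C (L.c j) * X ^ (L.d - j)

theorem intCharPoly_monic : L.intCharPoly.Monic := by
  refine monic_X_pow_sub ((degree_sum_le _ _).trans_lt ?_)
  refine (Finset.sup_lt_iff (WithBot.bot_lt_coe L.d)).2 fun j hj ↦ ?_
  refine (degree_C_mul_X_pow_le _ _).trans_lt ?_
  have : L.d - j < L.d := by simp only [Finset.mem_Icc] at hj; omega
  exact WithBot.coe_lt_coe.2 this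

theorem coeff_zero_intCharPoly : L.intCharPoly.coeff 0 = -L.c L.d := by
  simp only [intCharPoly, coeff_sub, coeff_X_pow, finsetSum_coeff, coeff_C_mul]
  rw [Finset.sum_eq_single_of_mem L.d (Finset.right_mem_Icc.2 L.d_pos) fun j hj hjd ↦ by
    simp only [Finset.mem_Icc] at hj
    rw [if_neg (by omega), mul_zero]]
  simp [L.d_pos.ne]

theorem isCharRoot_iff_aeval {z : ℂ} : L.IsCharRoot z ↔ aeval z L.intCharPoly = 0 := by
  have : L.intCharPoly.map (algebraMap ℤ ℂ) = L.charPoly := by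
    simp [intCharPoly, charPoly, Polynomial.map_sum]
  rw [IsCharRoot, IsRoot, ← this, eval_map_algebraMap]

variable {L}

theorem IsCharRoot.ne_zero {z : ℂ} (hz : L.IsCharRoot z) : z ≠ 0 := by
  rintro rfl
  rw [isCharRoot_iff_aeval, ← coeff_zero_eq_aeval_zero', coeff_zero_intCharPoly] at hz
  exact L.last_ne (by simpa using hz)

theorem IsCharRoot.conj {z : ℂ} (hz : L.IsCharRoot z) : L.IsCharRoot (conj z) := by
  rw [isCharRoot_iff_aeval] at hz ⊢
  simpa [hz] using aeval_algHom_apply (starRingEnd ℂ).toIntAlgHom z L.intCharPoly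

theorem IsDominantRoot.conj {z : ℂ} (hz : L.IsDominantRoot z) : L.IsDominantRoot (conj z) :=
  ⟨hz.1.conj, fun w hw ↦ (Complex.norm_conj z).symm ▸ hz.2 w hw⟩

theorem IsDominantRoot.exists_pow_eq_one {z : ℂ} (hz : L.IsDominantRoot z) (h : ‖z‖ ≤ 1) :
    ∃ n, 0 < n ∧ z ^ n = 1 :=
  Complex.exists_pow_eq_one_of_roots_norm_le_one L.intCharPoly_monic hz.1.ne_zero
    ((isCharRoot_iff_aeval L).1 hz.1)
    fun w hw ↦ (hz.2 w ((isCharRoot_iff_aeval L).2 hw)).trans h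

theorem IsDominantRoot.norm_eq {z w : ℂ} (hz : L.IsDominantRoot z) (hw : L.IsDominantRoot w) :
    ‖z‖ = ‖w‖ :=
  le_antisymm (hw.2 z hz.1) (hz.2 w hw.1)

theorem eq_conj_of_isDominantRoot_iff (hnondeg : L.NonDegenerate) {lam₁ lam₂ : ℂ}
    (hne : lam₁ ≠ lam₂) (hdom : ∀ x : ℂ, L.IsDominantRoot x ↔ (x = lam₁ ∨ x = lam₂)) :
    lam₂ = conj lam₁ := by
  have hdom₁ := (hdom lam₁).2 (.inl rfl)
  have hdom₂ := (hdom lam₂).2 (.inr rfl)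
  rcases (hdom _).1 hdom₂.conj with h₂ | h₂
  · rw [← h₂, Complex.conj_conj]
  rcases (hdom _).1 hdom₁.conj with h₁ | h₁
  · exact absurd (Complex.div_sq_eq_one_of_conj_eq_self h₁ h₂ hdom₂.1.ne_zero
      (hdom₁.norm_eq hdom₂)) (hnondeg _ _ hdom₁.1 hdom₂.1 hne 2 two_pos)
  · exact h₁.symm

end IntLRS

theorem stmt_1_general (L : IntLRS) (hnondeg : L.NonDegenerate)
    (lam₁ lam₂ : ℂ) (hne : lam₁ ≠ lam₂)
    (hdom : ∀ x : ℂ, L.IsDominantRoot x ↔ (x = lam₁ ∨ x = lam₂)) :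
    lam₂ = (starRingEnd ℂ) lam₁ ∧
      (∀ q : ℚ, Complex.arg lam₁ ≠ (q : ℝ) * Real.pi) ∧
      1 < ‖lam₁‖ := by
  have hdom₁ := (hdom lam₁).2 (.inl rfl)
  have hdom₂ := (hdom lam₂).2 (.inr rfl)
  have hratio := hnondeg _ _ hdom₁.1 hdom₂.1 hne
  have hconj := L.eq_conj_of_isDominantRoot_iff hnondeg hne hdom
  refine ⟨hconj, fun q hq ↦ hratio q.den q.den_pos ?_, ?_⟩
  · rw [hconj]
    exact Complex.div_conj_pow_den_eq_one hdom₁.1.ne_zero hq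
  · by_contra! h
    obtain ⟨m, hm, h₁⟩ := hdom₁.exists_pow_eq_one h
    obtain ⟨n, hn, h₂⟩ := hdom₂.exists_pow_eq_one ((hdom₂.norm_eq hdom₁).trans_le h)
    exact hratio (m * n) (Nat.mul_pos hm hn) <| by
      rw [div_pow, pow_mul, h₁, pow_mul', h₂, one_pow, one_pow, div_one]

/-- If a non-degenerate, simple integer LRS has exactly two dominant
characteristic roots `λ₁ ≠ λ₂`, then `λ₂ = conj λ₁`, the argument of `λ₁` is not a
rational multiple of `π`, and `|λ₁| > 1`. -/
theorem stmt_1 (L : IntLRS) (hsimple : L.Simple) (hnondeg : L.NonDegenerate)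
    (lam₁ lam₂ : ℂ) (hne : lam₁ ≠ lam₂)
    (hdom : ∀ x : ℂ, L.IsDominantRoot x ↔ (x = lam₁ ∨ x = lam₂)) :
    lam₂ = (starRingEnd ℂ) lam₁ ∧
      (∀ q : ℚ, Complex.arg lam₁ ≠ (q : ℝ) * Real.pi) ∧
      1 < ‖lam₁‖ :=
  stmt_1_general L hnondeg lam₁ lam₂ hne hdom
end

section
/- Let λ, θ, φ be as in the normalized dominant part of a non-degenerate, simple integer linear recurrence sequence with two dominant roots. Suppose an interval I ⊆ ℝ/(2πℤ), natural numbers b₂,…,b_ℓ ≥ 1 and D ≥ 1, and reals 1 < δ₂ < … < δ_ℓ < √|λ| satisfy conditions (a)–(d): (a) b_j ≡ t_j − t₁ (mod T); (b) for all x ∈ I, 0 < cos(x) < |λ|^{b₂}·cos(x+b₂θ) < δ₂·cos(x) < … < |λ|^{b_ℓ}·cos(x+b_ℓθ) < δ_ℓ·cos(x); (c) for every nonzero integer d < D with d ∉ {b₂,…,b_{ℓ−1}}, I ∩ J_d(1,δ_ℓ) = ∅; (d) Σ_{d=D}^∞ |J_d(1,δ_ℓ)| < |I|. Then for every sufficiently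 small ε > 0 there is a subinterval I' of I of length ε such that conditions (a)–(d) hold with I replaced by I', the same b₂,…,b_ℓ and δ₂,…,δ_ℓ, and some D' > ε^{−1/2} in place of D. -/
open Real MeasureTheory ENNReal

instance : Fact (0 < 2 * Real.pi) := ⟨by positivity⟩

noncomputable instance : MeasureSpace Real.Angle :=
  inferInstanceAs (MeasureSpace (AddCircle (2 * Real.pi)))

/-- The set `J_d(γ,δ) = {x ∈ ℝ/2πℤ : 0 < γ·cos x ∧ γ·cos x < |λ|^d·cos(x+dθ) < δ·cos x}`. -/
noncomputable def Jset (lam : ℂ) (θ : ℝ) (d : ℤ) (γ δ : ℝ) : Set Real.Angle :=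
  {x : Real.Angle | 0 < γ * x.cos ∧
    γ * x.cos < ‖lam‖ ^ d * (x + ((d * θ : ℝ) : Real.Angle)).cos ∧
    ‖lam‖ ^ d * (x + ((d * θ : ℝ) : Real.Angle)).cos < δ * x.cos}

/-- The limiting set `J_d(0,δ)`. -/
noncomputable def Jset0 (lam : ℂ) (θ : ℝ) (d : ℤ) (δ : ℝ) : Set Real.Angle :=
  {x : Real.Angle | 0 < x.cos ∧
    0 < ‖lam‖ ^ d * (x + ((d * θ : ℝ) : Real.Angle)).cos ∧
    ‖lam‖ ^ d * (x + ((d * θ : ℝ) : Real.Angle)).cos < δ * x.cos}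

/-
Since `cos x ≤ 1`, `J_d(1,δ)` lies in a translate of `{0 < cos < δ |λ|^{-d}}`, so
`|J_d(1,δ)| ≤ π δ |λ|^{-d}` and the tail `∑_{d ≥ N} |J_d|` decays geometrically; for
`D' > ε^{-1/2}` it is below `ε` as soon as `ε` is small.

Cut `I` into `M ≈ |I|/ε` cells of length `ε`. On a half-period the lift of `J_d` is an interval,
being cut out by inequalities `A cos x + B sin x > 0`, so it meets at most `|J_d|/ε + 2` cells.
Hence the `J_d` with `D ≤ d < D'` meet at most `(∑_{d ≥ D} |J_d|)/ε + 4(D' - D)` cells, fewer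
than `M` by (d), because `(D' - D) ε = O(√ε)`. A cell missing all of them satisfies (c), it
inherits (b) from `I`, and (d) is the tail bound.
-/

open Set Filter Topology

instance : BorelSpace Real.Angle := inferInstanceAs (BorelSpace (AddCircle (2 * π)))

instance : (volume : Measure Real.Angle).IsAddHaarMeasure :=
  inferInstanceAs (volume : Measure (AddCircle (2 * π))).IsAddHaarMeasure

open Classical in
lemma ofReal_card_filter_Ioo_inter_nonempty_mul_le {C : Set ℝ} (hC : C.OrdConnected) (a : ℝ)
    {ε : ℝ} (hε : 0 < ε) (M : ℕ) :
    ENNReal.ofReal (((Finset.range M).filter fun i : ℕ =>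
        (Ioo (a + i * ε) (a + i * ε + ε) ∩ C).Nonempty).card * ε) ≤
      volume C + ENNReal.ofReal (2 * ε) := by
  set K := (Finset.range M).filter fun i : ℕ => (Ioo (a + i * ε) (a + i * ε + ε) ∩ C).Nonempty
  rcases K.eq_empty_or_nonempty with hK | hK
  · simp [hK]
  set i₁ := K.min' hK
  set i₂ := K.max' hK
  have hcard : K.card + i₁ ≤ i₂ + 1 := by
    have := Finset.card_le_card (s := K) (t := Finset.Icc i₁ i₂) fun i hi =>
      Finset.mem_Icc.2 ⟨K.min'_le i hi, K.le_max' i hi⟩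
    rw [Nat.card_Icc] at this
    have := K.min'_le _ (K.max'_mem hK)
    omega
  have hcard' : (K.card : ℝ) + i₁ ≤ i₂ + 1 := by exact_mod_cast hcard
  obtain ⟨x, hx, hxC⟩ := (Finset.mem_filter.1 (K.min'_mem hK)).2
  obtain ⟨z, hz, hzC⟩ := (Finset.mem_filter.1 (K.max'_mem hK)).2
  have hsub : Ioo (a + (i₁ + 1) * ε) (a + i₂ * ε) ⊆ C := fun y hy =>
    hC.out hxC hzC ⟨by linarith [hx.2, hy.1], by linarith [hz.1, hy.2]⟩
  calc ENNReal.ofReal (K.card * ε)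
      ≤ ENNReal.ofReal ((a + i₂ * ε - (a + (i₁ + 1) * ε)) + 2 * ε) :=
        ENNReal.ofReal_le_ofReal (by nlinarith)
    _ ≤ ENNReal.ofReal (a + i₂ * ε - (a + (i₁ + 1) * ε)) + ENNReal.ofReal (2 * ε) :=
        ENNReal.ofReal_add_le
    _ ≤ volume C + ENNReal.ofReal (2 * ε) := by
        rw [← Real.volume_Ioo]
        gcongr

lemma exists_Ioo_disjoint_of_sum_lt {ι : Type*} (s : Finset ι) {C : ι → Set ℝ}
    (hC : ∀ j ∈ s, (C j).OrdConnected) (a : ℝ) {ε : ℝ} (hε : 0 < ε) (M : ℕ)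
    (h : ∑ j ∈ s, (volume (C j) + ENNReal.ofReal (2 * ε)) < ENNReal.ofReal (M * ε)) :
    ∃ i < M, ∀ j ∈ s, Disjoint (Ioo (a + i * ε) (a + i * ε + ε)) (C j) := by
  classical
  by_contra! hbad
  set K : ι → Finset ℕ := fun j => (Finset.range M).filter fun i : ℕ =>
    (Ioo (a + i * ε) (a + i * ε + ε) ∩ C j).Nonempty
  have hcover : Finset.range M ⊆ s.biUnion K := fun i hi => by
    obtain ⟨j, hj, hij⟩ := hbad i (Finset.mem_range.1 hi)
    exact Finset.mem_biUnion.2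
      ⟨j, hj, Finset.mem_filter.2 ⟨hi, not_disjoint_iff_nonempty_inter.1 hij⟩⟩
  have hM : (M : ℝ) ≤ ∑ j ∈ s, ((K j).card : ℝ) := by
    exact_mod_cast (Finset.card_range M ▸ Finset.card_le_card hcover).trans Finset.card_biUnion_le
  refine h.not_ge ?_
  calc ENNReal.ofReal (M * ε)
      ≤ ENNReal.ofReal (∑ j ∈ s, (K j).card * ε) := by
        rw [← Finset.sum_mul]; gcongr
    _ = ∑ j ∈ s, ENNReal.ofReal ((K j).card * ε) :=
        ENNReal.ofReal_sum_of_nonneg fun j _ => by positivity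
    _ ≤ ∑ j ∈ s, (volume (C j) + ENNReal.ofReal (2 * ε)) :=
        Finset.sum_le_sum fun j hj =>
          ofReal_card_filter_Ioo_inter_nonempty_mul_le (hC j hj) a hε M

lemma Real.ordConnected_Ioc_inter_setOf_cos_sin_pos (c A B : ℝ) :
    (Ioc c (c + π) ∩ {y | 0 < A * Real.cos y + B * Real.sin y}).OrdConnected := by
  refine ⟨fun x hx z hz y ⟨hxy, hyz⟩ => ⟨⟨hx.1.1.trans_le hxy, hyz.trans hz.1.2⟩, ?_⟩⟩
  rcases hxy.eq_or_lt with rfl | hxy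
  · exact hx.2
  rcases hyz.eq_or_lt with rfl | hyz
  · exact hz.2
  have hzx : z - x < π := by linarith [hx.1.1, hz.1.2]
  -- `A cos + B sin` solves `g'' = -g`, hence this three-point identity
  have key : (A * Real.cos y + B * Real.sin y) * Real.sin (z - x) =
      (A * Real.cos x + B * Real.sin x) * Real.sin (z - y) +
        (A * Real.cos z + B * Real.sin z) * Real.sin (y - x) := by
    simp only [Real.sin_sub]
    ring
  refine pos_of_mul_pos_left ?_ (Real.sin_pos_of_pos_of_lt_pi (by linarith) hzx).le
  rw [key]
  exact add_pos (mul_pos hx.2 (Real.sin_pos_of_pos_of_lt_pi (by linarith) (by linarith)))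
    (mul_pos hz.2 (Real.sin_pos_of_pos_of_lt_pi (by linarith) (by linarith)))

namespace Real.Angle

lemma volume_eq_volume_coe_preimage_inter_Ioc (t : ℝ) {U : Set Angle} (hU : MeasurableSet U) :
    volume U = volume (((↑) : ℝ → Angle) ⁻¹' U ∩ Ioc t (t + 2 * π)) :=
  AddCircle.add_projection_respects_measure (2 * π) t hU

lemma volume_eq_add_volume_coe_preimage_inter_Ioc (t : ℝ) {U : Set Angle}
    (hU : MeasurableSet U) :
    volume U = volume (((↑) : ℝ → Angle) ⁻¹' U ∩ Ioc t (t + π)) +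
      volume (((↑) : ℝ → Angle) ⁻¹' U ∩ Ioc (t + π) (t + π + π)) := by
  have hsplit : Ioc t (t + 2 * π) = Ioc t (t + π) ∪ Ioc (t + π) (t + π + π) := by
    rw [Ioc_union_Ioc_eq_Ioc (by linarith [pi_pos]) (by linarith [pi_pos])]
    ring_nf
  rw [volume_eq_volume_coe_preimage_inter_Ioc t hU, hsplit, inter_union_distrib_left]
  refine measure_union ?_ ((hU.preimage continuous_coe.measurable).inter measurableSet_Ioc)
  exact (Ioc_disjoint_Ioc_of_le le_rfl).mono inter_subset_right inter_subset_right

lemma volume_coe_image_Ioo {u v : ℝ} (h : v - u ≤ 2 * π) :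
    volume (((↑) : ℝ → Angle) '' Ioo u v) = ENNReal.ofReal (v - u) := by
  have hopen : IsOpen (((↑) : ℝ → Angle) '' Ioo u v) :=
    QuotientAddGroup.isOpenMap_coe _ isOpen_Ioo
  rw [volume_eq_volume_coe_preimage_inter_Ioc u hopen.measurableSet, ← Real.volume_Ioo]
  congr 1
  ext z
  refine ⟨fun ⟨⟨w, hw, hwz⟩, hz⟩ => ?_,
    fun hz => ⟨mem_image_of_mem _ hz, hz.1, by linarith [hz.2]⟩⟩
  have hw' : w ∈ Ioc u (u + 2 * π) := ⟨hw.1, by linarith [hw.2]⟩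
  rwa [← (AddCircle.coe_eq_coe_iff_of_mem_Ioc hw' hz).1 hwz]

lemma volume_coe_image_Ioo_le (u v : ℝ) :
    volume (((↑) : ℝ → Angle) '' Ioo u v) ≤ ENNReal.ofReal (min (v - u) (2 * π)) := by
  rcases le_total (v - u) (2 * π) with h | h
  · rw [min_eq_left h, volume_coe_image_Ioo h]
  · rw [min_eq_right h, ← AddCircle.measure_univ]
    exact measure_mono (subset_univ _)

lemma volume_setOf_cos_pos_lt_le (s : ℝ) :
    volume {x : Angle | 0 < x.cos ∧ x.cos < s} ≤ ENNReal.ofReal (π * s) := by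
  have hπ := pi_pos
  rcases le_or_gt s 0 with hs0 | hs0
  · have : {x : Angle | 0 < x.cos ∧ x.cos < s} = ∅ :=
      eq_empty_of_forall_notMem fun x hx => by linarith [hx.1, hx.2]
    simp [this]
  rcases le_or_gt 1 s with hs1 | hs1
  · calc volume {x : Angle | 0 < x.cos ∧ x.cos < s}
        ≤ volume (((↑) : ℝ → Angle) '' Ioo (-(π / 2)) (π / 2)) := by
          refine measure_mono fun x hx => ⟨x.toReal, ?_, coe_toReal x⟩
          exact abs_lt.1 (cos_pos_iff_abs_toReal_lt_pi_div_two.1 hx.1)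
      _ = ENNReal.ofReal π := by rw [volume_coe_image_Ioo (by linarith)]; congr 1; ring
      _ ≤ ENNReal.ofReal (π * s) := ENNReal.ofReal_le_ofReal (le_mul_of_one_le_right hπ.le hs1)
  obtain ⟨c, hc⟩ : ∃ c, c = π / 2 - π / 2 * s := ⟨_, rfl⟩
  have hband : ∀ x ∈ {x : Angle | 0 < x.cos ∧ x.cos < s},
      c < |x.toReal| ∧ |x.toReal| < π / 2 := by
    rintro x ⟨hpos, hlt⟩
    have habs := cos_pos_iff_abs_toReal_lt_pi_div_two.1 hpos
    refine ⟨lt_of_not_ge fun hle => ?_, habs⟩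
    have hsin : s ≤ Real.cos c := by
      rw [hc, Real.cos_pi_div_two_sub]
      have := mul_le_sin (x := π / 2 * s) (by positivity) (by nlinarith)
      rwa [show 2 / π * (π / 2 * s) = s by field_simp] at this
    have := Real.cos_le_cos_of_nonneg_of_le_pi (abs_nonneg _) (by nlinarith) hle
    rw [Real.cos_abs, cos_toReal] at this
    linarith
  calc volume {x : Angle | 0 < x.cos ∧ x.cos < s}
      ≤ volume (((↑) : ℝ → Angle) '' Ioo (-(π / 2)) (-c) ∪
          ((↑) : ℝ → Angle) '' Ioo c (π / 2)) := by
        refine measure_mono fun x hx => ?_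
        obtain ⟨h1, h2⟩ := hband x hx
        rw [← image_union]
        refine ⟨x.toReal, ?_, coe_toReal x⟩
        rcases lt_abs.1 h1 with h | h
        · exact Or.inr ⟨h, (abs_lt.1 h2).2⟩
        · exact Or.inl ⟨(abs_lt.1 h2).1, by linarith⟩
    _ ≤ volume (((↑) : ℝ → Angle) '' Ioo (-(π / 2)) (-c)) +
          volume (((↑) : ℝ → Angle) '' Ioo c (π / 2)) :=
        measure_union_le _ _
    _ = ENNReal.ofReal (π * s) := by
        rw [volume_coe_image_Ioo (by nlinarith), volume_coe_image_Ioo (by nlinarith),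
          ← ENNReal.ofReal_add (by nlinarith) (by nlinarith)]
        congr 1
        linarith

lemma exists_Ioo_disjoint_coe_preimage_of_sum_lt {ι : Type*} (s : Finset ι)
    {U : ι → Set Real.Angle} (hU : ∀ j ∈ s, MeasurableSet (U j))
    (hconn : ∀ j ∈ s, ∀ c : ℝ, (((↑) : ℝ → Real.Angle) ⁻¹' U j ∩ Ioc c (c + π)).OrdConnected)
    (a : ℝ) {ε : ℝ} (hε : 0 < ε) (M : ℕ) (hM : M * ε ≤ 2 * π)
    (h : ∑ j ∈ s, (volume (U j) + ENNReal.ofReal (4 * ε)) < ENNReal.ofReal (M * ε)) :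
    ∃ i < M, ∀ j ∈ s,
      Disjoint (Ioo (a + i * ε) (a + i * ε + ε)) (((↑) : ℝ → Real.Angle) ⁻¹' U j) := by
  set C : ι × ℕ → Set ℝ := fun p =>
    ((↑) : ℝ → Real.Angle) ⁻¹' U p.1 ∩ Ioc (a + p.2 * π) (a + p.2 * π + π)
  have hsum : ∑ p ∈ s ×ˢ Finset.range 2, (volume (C p) + ENNReal.ofReal (2 * ε)) =
      ∑ j ∈ s, (volume (U j) + ENNReal.ofReal (4 * ε)) := by
    rw [Finset.sum_product]
    refine Finset.sum_congr rfl fun j hj => ?_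
    rw [Finset.sum_range_succ, Finset.sum_range_one,
      volume_eq_add_volume_coe_preimage_inter_Ioc a (hU j hj),
      show 4 * ε = 2 * ε + 2 * ε by ring, ENNReal.ofReal_add (by positivity) (by positivity)]
    simp only [C, Nat.cast_zero, Nat.cast_one, zero_mul, add_zero, one_mul]
    ring
  obtain ⟨i, hiM, hi⟩ := exists_Ioo_disjoint_of_sum_lt (s ×ˢ Finset.range 2)
    (fun p hp => hconn p.1 (Finset.mem_product.1 hp).1 _) a hε M (hsum ▸ h)
  have hiM' : ((i : ℝ) + 1) * ε ≤ M * ε := by gcongr; exact_mod_cast hiM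
  have hi0 : 0 ≤ (i : ℝ) * ε := by positivity
  refine ⟨i, hiM, fun j hj => disjoint_left.2 fun y hy hyU => ?_⟩
  rcases le_or_gt y (a + π) with hyπ | hyπ
  · refine disjoint_left.1 (hi (j, 0) (by simp [hj])) hy ⟨hyU, ?_⟩
    simpa using ⟨by linarith [hy.1], hyπ⟩
  · refine disjoint_left.1 (hi (j, 1) (by simp [hj])) hy ⟨hyU, ?_⟩
    simpa using ⟨hyπ, by linarith [hy.2]⟩

end Real.Angle

lemma isOpen_Jset (lam : ℂ) (θ : ℝ) (d : ℤ) (γ δ : ℝ) : IsOpen (Jset lam θ d γ δ) := by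
  have hcos : Continuous Real.Angle.cos := Real.Angle.continuous_cos
  have hshift : Continuous fun x : Real.Angle => (x + ((d * θ : ℝ) : Real.Angle)).cos :=
    hcos.comp (continuous_add_const _)
  exact (isOpen_lt continuous_const (continuous_const.mul hcos)).inter
    ((isOpen_lt (continuous_const.mul hcos) (continuous_const.mul hshift)).inter
      (isOpen_lt (continuous_const.mul hshift) (continuous_const.mul hcos)))

lemma ordConnected_coe_preimage_Jset_inter_Ioc (lam : ℂ) (θ : ℝ) (d : ℤ) (δ c : ℝ) :
    (((↑) : ℝ → Real.Angle) ⁻¹' Jset lam θ d 1 δ ∩ Ioc c (c + π)).OrdConnected := by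
  set r := ‖lam‖ ^ d
  have h := ((Real.ordConnected_Ioc_inter_setOf_cos_sin_pos c 1 0).inter
    (Real.ordConnected_Ioc_inter_setOf_cos_sin_pos c (r * Real.cos (d * θ) - 1)
      (-(r * Real.sin (d * θ))))).inter
    (Real.ordConnected_Ioc_inter_setOf_cos_sin_pos c (δ - r * Real.cos (d * θ))
      (r * Real.sin (d * θ)))
  convert h using 1
  ext y
  simp only [Jset, mem_inter_iff, mem_preimage, mem_ofPred_eq, ← Real.Angle.coe_add,
    Real.Angle.cos_coe, Real.cos_add]
  constructor
  · rintro ⟨⟨h₁, h₂, h₃⟩, hy⟩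
    exact ⟨⟨⟨hy, by linarith⟩, hy, by linarith⟩, hy, by linarith⟩
  · rintro ⟨⟨⟨hy, h₁⟩, -, h₂⟩, -, h₃⟩
    exact ⟨⟨by linarith, by linarith, by linarith⟩, hy⟩

lemma volume_Jset_le {lam : ℂ} (hlam : 0 < ‖lam‖) (θ : ℝ) (d : ℤ) (δ : ℝ) :
    volume (Jset lam θ d 1 δ) ≤ ENNReal.ofReal (π * (δ / ‖lam‖ ^ d)) := by
  have hr : 0 < ‖lam‖ ^ d := zpow_pos hlam d
  calc volume (Jset lam θ d 1 δ)
      ≤ volume ((· + ((d * θ : ℝ) : Real.Angle)) ⁻¹'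
          {x : Real.Angle | 0 < x.cos ∧ x.cos < δ / ‖lam‖ ^ d}) := by
        refine measure_mono fun x ⟨h₁, h₂, h₃⟩ => ?_
        have hx : x.cos ≤ 1 := Real.Angle.cos_toReal x ▸ Real.cos_le_one _
        rw [one_mul] at h₁ h₂
        refine ⟨pos_of_mul_pos_right (h₁.trans h₂) hr.le, (lt_div_iff₀ hr).2 ?_⟩
        nlinarith
    _ = volume {x : Real.Angle | 0 < x.cos ∧ x.cos < δ / ‖lam‖ ^ d} :=
        measure_preimage_add_right _ _ _
    _ ≤ _ := Real.Angle.volume_setOf_cos_pos_lt_le _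

lemma tsum_volume_Jset_le {lam : ℂ} (habs : 1 < ‖lam‖) (θ δ : ℝ) (N : ℕ) :
    ∑' k : ℕ, volume (Jset lam θ (N + k) 1 δ) ≤
      ENNReal.ofReal (π * δ / (1 - ‖lam‖⁻¹) * ‖lam‖⁻¹ ^ N) := by
  have hlam : 0 < ‖lam‖ := one_pos.trans habs
  have hq0 : 0 ≤ ‖lam‖⁻¹ := inv_nonneg.2 hlam.le
  have hq1 : ‖lam‖⁻¹ < 1 := inv_lt_one_of_one_lt₀ habs
  have hterm (k : ℕ) : volume (Jset lam θ (N + k) 1 δ) ≤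
      ENNReal.ofReal (π * δ * ‖lam‖⁻¹ ^ N * ‖lam‖⁻¹ ^ k) := by
    refine (volume_Jset_le hlam θ _ δ).trans_eq (congrArg ENNReal.ofReal ?_)
    rw [show ((N : ℤ) + k) = ((N + k : ℕ) : ℤ) by push_cast; ring, zpow_natCast, inv_pow, inv_pow,
      pow_add]
    field_simp
  rcases le_or_gt δ 0 with hδ | hδ
  · have hzero (k : ℕ) : volume (Jset lam θ (N + k) 1 δ) = 0 :=
      nonpos_iff_eq_zero.1 ((hterm k).trans_eq (ENNReal.ofReal_eq_zero.2 (by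
        rw [mul_assoc (π * δ)]
        exact mul_nonpos_of_nonpos_of_nonneg (mul_nonpos_of_nonneg_of_nonpos pi_pos.le hδ)
          (by positivity))))
    simp [hzero]
  calc ∑' k : ℕ, volume (Jset lam θ (N + k) 1 δ)
      ≤ ∑' k : ℕ, ENNReal.ofReal (π * δ * ‖lam‖⁻¹ ^ N * ‖lam‖⁻¹ ^ k) :=
        ENNReal.tsum_le_tsum hterm
    _ = ENNReal.ofReal (∑' k : ℕ, π * δ * ‖lam‖⁻¹ ^ N * ‖lam‖⁻¹ ^ k) :=
        (ENNReal.ofReal_tsum_of_nonneg (fun k => by positivity)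
          ((summable_geometric_of_lt_one hq0 hq1).mul_left _)).symm
    _ = _ := by
        rw [tsum_mul_left, tsum_geometric_of_lt_one hq0 hq1]
        congr 1
        ring

lemma eventually_tsum_volume_Jset_lt {lam : ℂ} (habs : 1 < ‖lam‖) (θ δ : ℝ) :
    ∀ᶠ N : ℕ in atTop,
      ∑' k : ℕ, volume (Jset lam θ (N + k) 1 δ) < ENNReal.ofReal ((N : ℝ) ^ 2)⁻¹ := by
  have hq : |‖lam‖⁻¹| < 1 := by
    rw [abs_of_pos (inv_pos.2 (one_pos.trans habs))]
    exact inv_lt_one_of_one_lt₀ habs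
  have hlim := (tendsto_pow_const_mul_const_pow_of_abs_lt_one 2 hq).const_mul
    (π * δ / (1 - ‖lam‖⁻¹))
  rw [mul_zero] at hlim
  filter_upwards [hlim.eventually_lt_const one_pos, eventually_ge_atTop 1] with N hN hN1
  have hN2 : (0 : ℝ) < (N : ℝ) ^ 2 := by positivity
  refine (tsum_volume_Jset_le habs θ δ N).trans_lt
    ((ENNReal.ofReal_lt_ofReal_iff (by positivity)).2 ?_)
  calc π * δ / (1 - ‖lam‖⁻¹) * ‖lam‖⁻¹ ^ N
      = π * δ / (1 - ‖lam‖⁻¹) * ((N : ℝ) ^ 2 * ‖lam‖⁻¹ ^ N) * ((N : ℝ) ^ 2)⁻¹ := by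
        field_simp
    _ < 1 * ((N : ℝ) ^ 2)⁻¹ := mul_lt_mul_of_pos_right hN (inv_pos.2 hN2)
    _ = ((N : ℝ) ^ 2)⁻¹ := one_mul _

lemma exists_Ioo_subset_disjoint_Jset (lam : ℂ) (θ δ : ℝ) {a b ε : ℝ} (hε : 0 < ε) (D n : ℕ)
    (h : (∑' k : ℕ, volume (Jset lam θ (D + k) 1 δ)) + ENNReal.ofReal ((4 * n + 1) * ε) <
      ENNReal.ofReal (min (b - a) (2 * π))) :
    ∃ a', a ≤ a' ∧ a' + ε ≤ b ∧ ∀ d : ℤ, D ≤ d → d < D + n →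
      ((↑) : ℝ → Real.Angle) '' Ioo a' (a' + ε) ∩ Jset lam θ d 1 δ = ∅ := by
  set L := min (b - a) (2 * π)
  have hL : 0 < L := ENNReal.ofReal_pos.1 (zero_le.trans_lt h)
  set M := ⌊L / ε⌋₊
  have hML : M * ε ≤ L := (le_div_iff₀ hε).1 (Nat.floor_le (div_pos hL hε).le)
  have hLM : L ≤ M * ε + ε := by
    have := Nat.lt_floor_add_one (L / ε)
    rw [div_lt_iff₀ hε] at this
    linarith
  obtain ⟨i, hiM, hi⟩ := Real.Angle.exists_Ioo_disjoint_coe_preimage_of_sum_lt (Finset.range n)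
    (U := fun k => Jset lam θ (D + k) 1 δ) (fun k _ => (isOpen_Jset lam θ _ 1 δ).measurableSet)
    (fun k _ => ordConnected_coe_preimage_Jset_inter_Ioc lam θ _ δ) a hε M
    (hML.trans (min_le_right _ _)) <| by
      refine (ENNReal.add_lt_add_iff_right (ENNReal.ofReal_ne_top (r := ε))).1 ?_
      calc ∑ k ∈ Finset.range n, (volume (Jset lam θ (D + k) 1 δ) + ENNReal.ofReal (4 * ε)) +
            ENNReal.ofReal ε
          = ∑ k ∈ Finset.range n, volume (Jset lam θ (D + k) 1 δ) +
              ENNReal.ofReal ((4 * n + 1) * ε) := by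
            rw [Finset.sum_add_distrib, Finset.sum_const, Finset.card_range, nsmul_eq_mul,
              add_assoc, ← ENNReal.ofReal_natCast, ← ENNReal.ofReal_mul (Nat.cast_nonneg _),
              ← ENNReal.ofReal_add (by positivity) hε.le]
            congr 2
            ring
        _ ≤ (∑' k : ℕ, volume (Jset lam θ (D + k) 1 δ)) + ENNReal.ofReal ((4 * n + 1) * ε) := by
            gcongr
            exact ENNReal.sum_le_tsum _
        _ < ENNReal.ofReal L := h
        _ ≤ ENNReal.ofReal (M * ε) + ENNReal.ofReal ε := by
            rw [← ENNReal.ofReal_add (by positivity) hε.le]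
            exact ENNReal.ofReal_le_ofReal hLM
  have hiM' : ((i : ℝ) + 1) * ε ≤ M * ε := by gcongr; exact_mod_cast hiM
  refine ⟨a + i * ε, le_add_of_nonneg_right (by positivity),
    by linarith [min_le_left (b - a) (2 * π)], fun d hDd hdn => ?_⟩
  obtain ⟨k, rfl⟩ : ∃ k : ℕ, d = D + k := ⟨(d - D).toNat, by omega⟩
  rw [← image_inter_preimage, image_eq_empty, ← disjoint_iff_inter_eq_empty]
  exact hi k (Finset.mem_range.2 (by omega))

lemma exists_Ioo_subset_disjoint_Jset_and_tsum_lt {lam : ℂ} {θ δ a b ε : ℝ} (hε : 0 < ε)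
    {D N₀ : ℕ} (hN₀ : ∀ N ≥ N₀,
      ∑' k : ℕ, volume (Jset lam θ (N + k) 1 δ) < ENNReal.ofReal ((N : ℝ) ^ 2)⁻¹)
    (hsmall : (∑' k : ℕ, volume (Jset lam θ (D + k) 1 δ)) +
      ENNReal.ofReal ((4 * N₀ + 5) * ε + 4 * √ε) < ENNReal.ofReal (min (b - a) (2 * π))) :
    ∃ a', a ≤ a' ∧ a' + ε ≤ b ∧ ∃ D' : ℕ, (√ε)⁻¹ < D' ∧
      (∀ d : ℤ, D ≤ d → d < D' →
        ((↑) : ℝ → Real.Angle) '' Ioo a' (a' + ε) ∩ Jset lam θ d 1 δ = ∅) ∧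
      ∑' k : ℕ, volume (Jset lam θ (D' + k) 1 δ) <
        volume (((↑) : ℝ → Real.Angle) '' Ioo a' (a' + ε)) := by
  have hsqrt : 0 < √ε := Real.sqrt_pos.2 hε
  set n := N₀ + ⌊(√ε)⁻¹⌋₊ + 1
  have hn : (√ε)⁻¹ < n := by
    have := Nat.lt_floor_add_one (√ε)⁻¹
    push_cast [n]
    linarith [(Nat.cast_nonneg N₀ : (0 : ℝ) ≤ N₀)]
  have hnε : (4 * n + 1) * ε ≤ (4 * N₀ + 5) * ε + 4 * √ε := by
    have h : (√ε)⁻¹ * ε = √ε := by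
      rw [inv_mul_eq_div, div_eq_iff hsqrt.ne', Real.mul_self_sqrt hε.le]
    have := Nat.floor_le (inv_nonneg.2 hsqrt.le)
    push_cast [n]
    nlinarith
  obtain ⟨a', ha', hb', hdisj⟩ := exists_Ioo_subset_disjoint_Jset lam θ δ hε D n
    (lt_of_le_of_lt (by gcongr) hsmall)
  refine ⟨a', ha', hb', D + n, by push_cast; linarith [(Nat.cast_nonneg D : (0 : ℝ) ≤ D)],
    fun d hDd hd => hdisj d hDd (by push_cast at hd; exact hd), ?_⟩
  have hε2π : ε ≤ 2 * π := by
    have := (ENNReal.ofReal_lt_ofReal_iff'.1 (le_add_self.trans_lt hsmall)).1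
    nlinarith [min_le_right (b - a) (2 * π), (Nat.cast_nonneg N₀ : (0 : ℝ) ≤ N₀)]
  rw [Real.Angle.volume_coe_image_Ioo (by linarith), add_sub_cancel_left]
  refine (hN₀ (D + n) (by omega)).trans_le (ENNReal.ofReal_le_ofReal ?_)
  rw [inv_le_comm₀ (by positivity) hε, ← Real.sq_sqrt hε.le, ← inv_pow]
  exact pow_le_pow_left₀ (inv_nonneg.2 hsqrt.le) (hn.le.trans (by simp)) 2

theorem stmt_11_general (lam : ℂ) (θ : ℝ)
    (habs : 1 < ‖lam‖)
    (ℓ : ℕ)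
    (a b : ℝ)
    (D : ℕ)
    (bf : ℕ → ℕ)
    (δ' : ℕ → ℝ)
    (hcondB : ∀ x : Real.Angle, x ∈ (fun y : ℝ => (y : Real.Angle)) '' Set.Ioo a b →
      0 < x.cos ∧
      ∀ j : ℕ, 2 ≤ j → j ≤ ℓ →
        δ' (j - 1) * x.cos <
            ‖lam‖ ^ (bf j : ℤ) * (x + ((bf j * θ : ℝ) : Real.Angle)).cos ∧
          ‖lam‖ ^ (bf j : ℤ) * (x + ((bf j * θ : ℝ) : Real.Angle)).cos <
            δ' j * x.cos)
    (hcondC : ∀ d : ℤ, d ≠ 0 → d < (D : ℤ) →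
      (∀ j : ℕ, 2 ≤ j → j ≤ ℓ - 1 → d ≠ (bf j : ℤ)) →
      ((fun y : ℝ => (y : Real.Angle)) '' Set.Ioo a b) ∩ Jset lam θ d 1 (δ' ℓ) = ∅)
    (hcondD : ∑' k : ℕ, volume (Jset lam θ ((D : ℤ) + (k : ℤ)) 1 (δ' ℓ)) <
      volume ((fun y : ℝ => (y : Real.Angle)) '' Set.Ioo a b)) :
    ∃ ε₀ : ℝ, 0 < ε₀ ∧ ∀ ε : ℝ, 0 < ε → ε < ε₀ →
      ∃ a' b' : ℝ, a ≤ a' ∧ a' < b' ∧ b' ≤ b ∧ b' - a' = ε ∧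
        ∃ D' : ℕ, ε ^ (-(1 : ℝ) / 2) < (D' : ℝ) ∧
          (∀ x : Real.Angle, x ∈ (fun y : ℝ => (y : Real.Angle)) '' Set.Ioo a' b' →
            0 < x.cos ∧
            ∀ j : ℕ, 2 ≤ j → j ≤ ℓ →
              δ' (j - 1) * x.cos <
                  ‖lam‖ ^ (bf j : ℤ) * (x + ((bf j * θ : ℝ) : Real.Angle)).cos ∧
                ‖lam‖ ^ (bf j : ℤ) * (x + ((bf j * θ : ℝ) : Real.Angle)).cos <
                  δ' j * x.cos) ∧
          (∀ d : ℤ, d ≠ 0 → d < (D' : ℤ) →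
            (∀ j : ℕ, 2 ≤ j → j ≤ ℓ - 1 → d ≠ (bf j : ℤ)) →
            ((fun y : ℝ => (y : Real.Angle)) '' Set.Ioo a' b') ∩ Jset lam θ d 1 (δ' ℓ) = ∅) ∧
          (∑' k : ℕ, volume (Jset lam θ ((D' : ℤ) + (k : ℤ)) 1 (δ' ℓ)) <
            volume ((fun y : ℝ => (y : Real.Angle)) '' Set.Ioo a' b')) := by
  obtain ⟨N₀, hN₀⟩ := eventually_atTop.1 (eventually_tsum_volume_Jset_lt habs θ (δ' ℓ))
  have hsmall : ∀ᶠ ε in 𝓝[>] 0, (∑' k : ℕ, volume (Jset lam θ (D + k) 1 (δ' ℓ))) +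
      ENNReal.ofReal ((4 * N₀ + 5) * ε + 4 * √ε) < ENNReal.ofReal (min (b - a) (2 * π)) := by
    have hlim : Tendsto (fun ε : ℝ => (4 * N₀ + 5) * ε + 4 * √ε) (𝓝 0) (𝓝 0) :=
      (by fun_prop : Continuous fun ε : ℝ => (4 * N₀ + 5) * ε + 4 * √ε).tendsto' 0 0 (by simp)
    have hI := hcondD.trans_le (Real.Angle.volume_coe_image_Ioo_le a b)
    refine nhdsWithin_le_nhds ((ENNReal.tendsto_ofReal hlim).const_add _ |>.eventually_lt_const ?_)
    simpa using hI
  obtain ⟨ε₀, hε₀, hε₀small⟩ := mem_nhdsGT_iff_exists_Ioo_subset.1 hsmall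
  refine ⟨ε₀, hε₀, fun ε hε hεε₀ => ?_⟩
  obtain ⟨a', ha', hb', D', hD', hdisj, htail⟩ :=
    exists_Ioo_subset_disjoint_Jset_and_tsum_lt hε hN₀ (hε₀small ⟨hε, hεε₀⟩)
  have hsub : Ioo a' (a' + ε) ⊆ Ioo a b := Ioo_subset_Ioo ha' hb'
  refine ⟨a', a' + ε, ha', by linarith, hb', by ring, D', ?_,
    fun x hx => hcondB x (image_mono hsub hx), fun d hd0 hdD' hdbf => ?_, htail⟩
  · rwa [neg_div, Real.rpow_neg hε.le, ← Real.sqrt_eq_rpow]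
  · rcases lt_or_ge d D with hdD | hdD
    · exact subset_eq_empty (inter_subset_inter_left _ (image_mono hsub)) (hcondC d hd0 hdD hdbf)
    · exact hdisj d hdD hdD'

/-- Suppose the interval `I = (a,b)` of `ℝ/2πℤ`, the naturals
`b₂,…,b_ℓ ≥ 1`, `D ≥ 1`, and reals `1 = δ₁ < δ₂ < ⋯ < δ_ℓ < √|λ|` satisfy conditions
(a)–(d) of the density lemma. Then for every sufficiently small `ε > 0` there is a
subinterval `I' ⊆ I` of length `ε` for which conditions (b)–(d) hold with the same
`b_j, δ_j` and some `D' > ε^{-1/2}` in place of `D`. -/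
theorem stmt_11 (lam : ℂ) (θ : ℝ)
    (halg : IsAlgebraic ℚ lam) (habs : 1 < ‖lam‖)
    (hθ : lam = (‖lam‖ : ℂ) * Complex.exp (θ * Complex.I))
    (hirr : ∀ q : ℚ, θ ≠ (q : ℝ) * Real.pi)
    (ℓ T : ℕ) (hℓ : 2 ≤ ℓ) (hT : 2 ≤ T)
    (t : ℕ → ℕ) (ht : ∀ j : ℕ, 1 ≤ j → j ≤ ℓ → t j < T)
    (a b : ℝ) (hab : a < b)
    (D : ℕ) (hD : 1 ≤ D)
    (bf : ℕ → ℕ) (hbf : ∀ j : ℕ, 2 ≤ j → j ≤ ℓ → 1 ≤ bf j)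
    (δ' : ℕ → ℝ) (hδ1 : δ' 1 = 1)
    (hδmono : ∀ j : ℕ, 1 ≤ j → j < ℓ → δ' j < δ' (j + 1))
    (hδtop : δ' ℓ < Real.sqrt (‖lam‖))
    (hcondA : ∀ j : ℕ, 2 ≤ j → j ≤ ℓ →
      ((bf j : ℤ)) ≡ ((t j : ℤ) - (t 1 : ℤ)) [ZMOD (T : ℤ)])
    (hcondB : ∀ x : Real.Angle, x ∈ (fun y : ℝ => (y : Real.Angle)) '' Set.Ioo a b →
      0 < x.cos ∧
      ∀ j : ℕ, 2 ≤ j → j ≤ ℓ →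
        δ' (j - 1) * x.cos <
            ‖lam‖ ^ (bf j : ℤ) * (x + ((bf j * θ : ℝ) : Real.Angle)).cos ∧
          ‖lam‖ ^ (bf j : ℤ) * (x + ((bf j * θ : ℝ) : Real.Angle)).cos <
            δ' j * x.cos)
    (hcondC : ∀ d : ℤ, d ≠ 0 → d < (D : ℤ) →
      (∀ j : ℕ, 2 ≤ j → j ≤ ℓ - 1 → d ≠ (bf j : ℤ)) →
      ((fun y : ℝ => (y : Real.Angle)) '' Set.Ioo a b) ∩ Jset lam θ d 1 (δ' ℓ) = ∅)
    (hcondD : ∑' k : ℕ, volume (Jset lam θ ((D : ℤ) + (k : ℤ)) 1 (δ' ℓ)) <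
      volume ((fun y : ℝ => (y : Real.Angle)) '' Set.Ioo a b)) :
    ∃ ε₀ : ℝ, 0 < ε₀ ∧ ∀ ε : ℝ, 0 < ε → ε < ε₀ →
      ∃ a' b' : ℝ, a ≤ a' ∧ a' < b' ∧ b' ≤ b ∧ b' - a' = ε ∧
        ∃ D' : ℕ, ε ^ (-(1 : ℝ) / 2) < (D' : ℝ) ∧
          (∀ x : Real.Angle, x ∈ (fun y : ℝ => (y : Real.Angle)) '' Set.Ioo a' b' →
            0 < x.cos ∧
            ∀ j : ℕ, 2 ≤ j → j ≤ ℓ →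
              δ' (j - 1) * x.cos <
                  ‖lam‖ ^ (bf j : ℤ) * (x + ((bf j * θ : ℝ) : Real.Angle)).cos ∧
                ‖lam‖ ^ (bf j : ℤ) * (x + ((bf j * θ : ℝ) : Real.Angle)).cos <
                  δ' j * x.cos) ∧
          (∀ d : ℤ, d ≠ 0 → d < (D' : ℤ) →
            (∀ j : ℕ, 2 ≤ j → j ≤ ℓ - 1 → d ≠ (bf j : ℤ)) →
            ((fun y : ℝ => (y : Real.Angle)) '' Set.Ioo a' b') ∩ Jset lam θ d 1 (δ' ℓ) = ∅) ∧
          (∑' k : ℕ, volume (Jset lam θ ((D' : ℤ) + (k : ℤ)) 1 (δ' ℓ)) <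
            volume ((fun y : ℝ => (y : Real.Angle)) '' Set.Ioo a' b')) :=
  stmt_11_general lam θ habs ℓ a b D bf δ' hcondB hcondC hcondD
end

section
/- Let λ, θ be as in the normalized dominant part of a non-degenerate, simple integer linear recurrence sequence with two dominant roots. Then for every integer d ≥ 1 and every real η with 0 < η < √|λ|, there is exactly one x ∈ (−π/2, π/2] satisfying |λ|^d·cos(x + dθ) = η·cos(x), and this x lies in the open interval (−π/2, π/2). -/
/-!
Expanding `cos (x + φ)`, the equation `a cos (x + φ) = η cos x` is linear in `(cos x, sin x)`.
When `a sin φ ≠ 0` it forces `cos x ≠ 0`, and dividing by `cos x` turns it into `tan x = c` for an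
explicit constant `c`, whose only solution in `(-π/2, π/2)` is `arctan c`. For `φ = dθ` the
condition `sin (dθ) ≠ 0` is exactly where `θ ∉ ℚπ` enters.
-/

open Real Set

namespace Real

theorem sin_nat_mul_ne_zero {θ : ℝ} (hθ : ∀ q : ℚ, θ ≠ q * π) {d : ℕ} (hd : d ≠ 0) :
    sin (d * θ) ≠ 0 := by
  intro h
  obtain ⟨k, hk⟩ := sin_eq_zero_iff.mp h
  apply hθ ((k : ℚ) / d)
  have hd' : (d : ℝ) ≠ 0 := Nat.cast_ne_zero.mpr hd
  push_cast
  field_simp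
  linarith

section CosAddEqMulCos

variable {a φ η : ℝ}

theorem cos_add_eq_mul_cos_iff_tan_eq {x : ℝ} (hx : cos x ≠ 0) (h : a * sin φ ≠ 0) :
    a * cos (x + φ) = η * cos x ↔ tan x = (a * cos φ - η) / (a * sin φ) := by
  rw [cos_add, tan_eq_sin_div_cos, div_eq_div_iff hx h]
  constructor <;> intro h <;> linarith

theorem cos_add_eq_mul_cos_ne_pi_div_two (h : a * sin φ ≠ 0) :
    a * cos (π / 2 + φ) ≠ η * cos (π / 2) := by
  rw [cos_pi_div_two, cos_add, cos_pi_div_two, sin_pi_div_two]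
  simpa using h

theorem mem_Ioo_of_cos_add_eq_mul_cos (h : a * sin φ ≠ 0) {x : ℝ}
    (hx : x ∈ Ioc (-(π / 2)) (π / 2)) (heq : a * cos (x + φ) = η * cos x) :
    x ∈ Ioo (-(π / 2)) (π / 2) := by
  refine ⟨hx.1, hx.2.lt_of_ne ?_⟩
  rintro rfl
  exact cos_add_eq_mul_cos_ne_pi_div_two h heq

theorem existsUnique_cos_add_eq_mul_cos (h : a * sin φ ≠ 0) :
    ∃! x : ℝ, x ∈ Ioc (-(π / 2)) (π / 2) ∧ a * cos (x + φ) = η * cos x := by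
  set c := (a * cos φ - η) / (a * sin φ)
  have hc := arctan_mem_Ioo c
  refine ⟨arctan c, ⟨Ioo_subset_Ioc_self hc, ?_⟩, ?_⟩
  · exact (cos_add_eq_mul_cos_iff_tan_eq (cos_pos_of_mem_Ioo hc).ne' h).mpr (tan_arctan c)
  · rintro y ⟨hy, hyeq⟩
    have hy' := mem_Ioo_of_cos_add_eq_mul_cos h hy hyeq
    have htan := (cos_add_eq_mul_cos_iff_tan_eq (cos_pos_of_mem_Ioo hy').ne' h).mp hyeq
    exact injOn_tan hy' hc (htan.trans (tan_arctan c).symm)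

end CosAddEqMulCos

end Real

theorem stmt_13_general (lam : ℂ) (θ : ℝ)
    (habs : 1 < ‖lam‖)
    (hirr : ∀ q : ℚ, θ ≠ (q : ℝ) * Real.pi) :
    ∀ (d : ℕ), 1 ≤ d → ∀ η : ℝ, 0 < η → η < Real.sqrt (‖lam‖) →
      (∃! x : ℝ, x ∈ Set.Ioc (-(Real.pi / 2)) (Real.pi / 2) ∧
        ‖lam‖ ^ d * Real.cos (x + d * θ) = η * Real.cos x) ∧
      (∀ x : ℝ, x ∈ Set.Ioc (-(Real.pi / 2)) (Real.pi / 2) →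
        ‖lam‖ ^ d * Real.cos (x + d * θ) = η * Real.cos x →
        x ∈ Set.Ioo (-(Real.pi / 2)) (Real.pi / 2)) := by
  intro d hd η _ _
  have hcoef : ‖lam‖ ^ d * sin (d * θ) ≠ 0 :=
    mul_ne_zero (pow_pos (one_pos.trans habs) d).ne' (sin_nat_mul_ne_zero hirr (by omega))
  exact ⟨existsUnique_cos_add_eq_mul_cos hcoef, fun _ => mem_Ioo_of_cos_add_eq_mul_cos hcoef⟩

/-- With `λ, θ` as in the normalized dominant part (so `λ` is algebraic
with `|λ| > 1` and `λ = |λ|e^{iθ}`, `θ` not a rational multiple of `π`), for every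
integer `d ≥ 1` and every real `0 < η < √|λ|` there is exactly one `x ∈ (-π/2, π/2]`
with `|λ|^d·cos(x + dθ) = η·cos x`, and this `x` lies in the open interval
`(-π/2, π/2)`. -/
theorem stmt_13 (lam : ℂ) (θ : ℝ)
    (halg : IsAlgebraic ℚ lam) (habs : 1 < ‖lam‖)
    (hθ : lam = (‖lam‖ : ℂ) * Complex.exp (θ * Complex.I))
    (hirr : ∀ q : ℚ, θ ≠ (q : ℝ) * Real.pi) :
    ∀ (d : ℕ), 1 ≤ d → ∀ η : ℝ, 0 < η → η < Real.sqrt (‖lam‖) →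
      (∃! x : ℝ, x ∈ Set.Ioc (-(Real.pi / 2)) (Real.pi / 2) ∧
        ‖lam‖ ^ d * Real.cos (x + d * θ) = η * Real.cos x) ∧
      (∀ x : ℝ, x ∈ Set.Ioc (-(Real.pi / 2)) (Real.pi / 2) →
        ‖lam‖ ^ d * Real.cos (x + d * θ) = η * Real.cos x →
        x ∈ Set.Ioo (-(Real.pi / 2)) (Real.pi / 2)) :=
  stmt_13_general lam θ habs hirr
end

section
/- Let u : ℕ → ℤ be defined by u₀ = 2, u₁ = 4, u₂ = 7 and u_{n+3} = 6·u_{n+2} − 13·u_{n+1} + 10·u_n for all n ∈ ℕ. Then the sets {n ∈ ℕ : u_n > 0} and {n ∈ ℕ : u_n < 0} are both infinite. -/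
/-!
The characteristic polynomial factors as `(X - 2) (X ^ 2 - 4 X + 5)`, and matching initial values
gives `u n = 2 ^ n + Re ((2 + i) ^ n) = 2 ^ n + √5 ^ n cos (n θ)` with `θ = arg (2 + i) ∈ (0, π / 3]`.
Since the angles `n θ` advance by at most `π / 3`, they land infinitely often in the arcs
`|x| ≤ π / 3` and `|x - π| ≤ π / 3` modulo `2 π`, where `cos x ≥ 1 / 2`, resp. `cos x ≤ -1 / 2`.
In the first case `u n > 0`; in the second `u n ≤ 2 ^ n - √5 ^ n / 2 < 0` once `n ≥ 7`.
-/

open Real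

lemma Complex.re_pow_eq_norm_pow_mul_cos_arg (z : ℂ) (n : ℕ) :
    (z ^ n).re = ‖z‖ ^ n * Real.cos (n * z.arg) := by
  conv_lhs => rw [← Complex.norm_mul_exp_arg_mul_I z]
  rw [mul_pow, ← Complex.exp_nat_mul, ← Complex.ofReal_pow, Complex.re_ofReal_mul, ← mul_assoc]
  exact_mod_cast congrArg (‖z‖ ^ n * ·) (Complex.exp_ofReal_mul_I_re (n * z.arg))

lemma exists_nat_gt_abs_nat_mul_sub_lt {θ : ℝ} (hθ : 0 < θ) (c : ℝ) (M : ℕ) :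
    ∃ n > M, ∃ k : ℤ, |n * θ - (c + k * (2 * π))| < θ := by
  obtain ⟨k, hk⟩ : ∃ k : ℤ, (M + 1) * θ ≤ c + k * (2 * π) := by
    refine ⟨⌈((M + 1) * θ - c) / (2 * π)⌉, ?_⟩
    have := Int.le_ceil (((M + 1) * θ - c) / (2 * π))
    rw [div_le_iff₀ (by positivity)] at this
    linarith
  set t := c + k * (2 * π)
  have hMt : (M + 1 : ℝ) ≤ t / θ := (le_div_iff₀ hθ).2 hk
  have ht_le : t / θ ≤ ⌈t / θ⌉₊ := Nat.le_ceil _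
  have ht_lt : (⌈t / θ⌉₊ : ℝ) < t / θ + 1 := Nat.ceil_lt_add_one (by linarith)
  refine ⟨⌈t / θ⌉₊, by exact_mod_cast hMt.trans ht_le, k, abs_lt.2 ⟨?_, ?_⟩⟩
  · rw [div_le_iff₀ hθ] at ht_le
    linarith
  · rw [← sub_lt_iff_lt_add, lt_div_iff₀ hθ] at ht_lt
    linarith

lemma half_le_cos_of_abs_sub_int_mul_two_pi_le {x : ℝ} (k : ℤ)
    (h : |x - k * (2 * π)| ≤ π / 3) : 1 / 2 ≤ cos x := by
  rw [← cos_sub_int_mul_two_pi x k, ← cos_abs, ← cos_pi_div_three]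
  exact cos_le_cos_of_nonneg_of_le_pi (abs_nonneg _) (by linarith [pi_pos]) h

lemma exists_nat_gt_half_le_cos_nat_mul {θ : ℝ} (hθ : 0 < θ) (hθπ : θ ≤ π / 3) (M : ℕ) :
    ∃ n > M, 1 / 2 ≤ cos (n * θ) := by
  obtain ⟨n, hnM, k, hk⟩ := exists_nat_gt_abs_nat_mul_sub_lt hθ 0 M
  rw [zero_add] at hk
  exact ⟨n, hnM, half_le_cos_of_abs_sub_int_mul_two_pi_le k (by linarith)⟩

lemma exists_nat_gt_cos_nat_mul_le_neg_half {θ : ℝ} (hθ : 0 < θ) (hθπ : θ ≤ π / 3) (M : ℕ) :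
    ∃ n > M, cos (n * θ) ≤ -(1 / 2) := by
  obtain ⟨n, hnM, k, hk⟩ := exists_nat_gt_abs_nat_mul_sub_lt hθ π M
  rw [← sub_sub] at hk
  have := half_le_cos_of_abs_sub_int_mul_two_pi_le (x := n * θ - π) k (by linarith)
  rw [cos_sub_pi] at this
  exact ⟨n, hnM, by linarith⟩

lemma norm_two_add_I_sq : ‖2 + Complex.I‖ ^ 2 = 5 := by
  rw [Complex.sq_norm, Complex.normSq_apply]
  norm_num

lemma arg_two_add_I_pos : 0 < (2 + Complex.I).arg := by
  refine (Complex.arg_nonneg_iff.2 (by simp)).lt_of_ne' ?_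
  simp [Complex.arg_eq_zero_iff]

lemma arg_two_add_I_le : (2 + Complex.I).arg ≤ π / 3 := by
  by_contra! h
  have hcos := cos_lt_cos_of_nonneg_of_le_pi (by positivity) (Complex.arg_le_pi _) h
  have hnorm : ‖2 + Complex.I‖ ≤ 3 := by
    refine (Complex.norm_le_abs_re_add_abs_im _).trans ?_
    norm_num
  rw [Complex.cos_arg (by simp [Complex.ext_iff]), cos_pi_div_three] at hcos
  simp only [Complex.add_re, Complex.I_re, add_zero] at hcos
  norm_num at hcos
  rw [div_lt_iff₀ (norm_pos_iff.2 (by simp [Complex.ext_iff]))] at hcos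
  linarith

lemma four_pow_succ_lt_five_pow {n : ℕ} (hn : 7 ≤ n) : 4 ^ (n + 1) < 5 ^ n := by
  induction n, hn using Nat.le_induction with
  | base => norm_num
  | succ n _ ih => rw [pow_succ, pow_succ 5]; omega

lemma two_pow_succ_lt_norm_two_add_I_pow {n : ℕ} (hn : 7 ≤ n) :
    (2 : ℝ) ^ (n + 1) < ‖2 + Complex.I‖ ^ n := by
  refine lt_of_pow_lt_pow_left₀ 2 (by positivity) ?_
  rw [← pow_mul, ← pow_mul, mul_comm, pow_mul, mul_comm n, pow_mul, norm_two_add_I_sq]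
  exact_mod_cast four_pow_succ_lt_five_pow hn

lemma cast_eq_two_pow_add_re_pow (u : ℕ → ℤ) (h0 : u 0 = 2) (h1 : u 1 = 4) (h2 : u 2 = 7)
    (hrec : ∀ n : ℕ, u (n + 3) = 6 * u (n + 2) - 13 * u (n + 1) + 10 * u n) (n : ℕ) :
    (u n : ℝ) = 2 ^ n + ((2 + Complex.I) ^ n).re := by
  induction n using Nat.strong_induction_on with
  | _ n ih =>
    match n with
    | 0 => norm_num [h0]
    | 1 => rw [h1]; norm_num
    | 2 => simp [h2, sq]; norm_num
    | m + 3 =>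
      have hz : (2 + Complex.I) ^ (m + 3)
          = 6 * (2 + Complex.I) ^ (m + 2) - 13 * (2 + Complex.I) ^ (m + 1)
            + 10 * (2 + Complex.I) ^ m := by
        linear_combination (2 + Complex.I) ^ m * Complex.I * Complex.I_sq
      have hre := congrArg Complex.re hz
      simp only [Complex.add_re, Complex.sub_re, Complex.mul_re] at hre
      rw [hrec m]
      push_cast
      rw [ih m (by omega), ih (m + 1) (by omega), ih (m + 2) (by omega), hre]
      norm_num
      ring

/-- For the integer sequence with `u₀ = 2`, `u₁ = 4`, `u₂ = 7` and
`u_{n+3} = 6u_{n+2} - 13u_{n+1} + 10u_n`, the sets of indices where `u_n > 0` and where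
`u_n < 0` are both infinite. -/
theorem stmt_16 (u : ℕ → ℤ) (h0 : u 0 = 2) (h1 : u 1 = 4) (h2 : u 2 = 7)
    (hrec : ∀ n : ℕ, u (n + 3) = 6 * u (n + 2) - 13 * u (n + 1) + 10 * u n) :
    {n : ℕ | 0 < u n}.Infinite ∧ {n : ℕ | u n < 0}.Infinite := by
  have hu (n : ℕ) :
      (u n : ℝ) = 2 ^ n + ‖2 + Complex.I‖ ^ n * cos (n * (2 + Complex.I).arg) := by
    rw [cast_eq_two_pow_add_re_pow u h0 h1 h2 hrec, Complex.re_pow_eq_norm_pow_mul_cos_arg]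
  constructor
  · refine Set.infinite_of_forall_exists_gt fun M => ?_
    obtain ⟨n, hMn, hcos⟩ :=
      exists_nat_gt_half_le_cos_nat_mul arg_two_add_I_pos arg_two_add_I_le M
    refine ⟨n, ?_, hMn⟩
    have : (0 : ℝ) < u n := by
      rw [hu]
      exact add_pos_of_pos_of_nonneg (by positivity) (mul_nonneg (by positivity) (by linarith))
    exact_mod_cast this
  · refine Set.infinite_of_forall_exists_gt fun M => ?_
    obtain ⟨n, hn, hcos⟩ :=
      exists_nat_gt_cos_nat_mul_le_neg_half arg_two_add_I_pos arg_two_add_I_le (max M 7)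
    obtain ⟨hMn, h7n⟩ := max_lt_iff.1 hn
    refine ⟨n, ?_, hMn⟩
    have hgrowth := two_pow_succ_lt_norm_two_add_I_pow h7n.le
    rw [pow_succ] at hgrowth
    have : (u n : ℝ) < 0 := calc
      (u n : ℝ) ≤ 2 ^ n + ‖2 + Complex.I‖ ^ n * -(1 / 2) := by rw [hu]; gcongr
      _ < 0 := by linarith
    exact_mod_cast this
end
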